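/- The multi-class hinged-Pairs function P_α(G) = Σ_{i≠j} [[n^i_G − α]₊ · [n^j_G − α]₊ − α²]₊ is non-negative, zero on single-class sets, monotone, and supermodular. -/
import Mathlib


/-- number of objects of class `i` in `G` -/
def classCount {α : Type*} [DecidableEq α] {k : ℕ} (cls : α → Fin k)
    (i : Fin k) (G : Finset α) : ℕ :=
  (G.filter fun x => cls x = i).card

/-- the multi-class hinged-Pairs impurity function -/
noncomputable def hingedPairs {α : Type*} [DecidableEq α] {k : ℕ} (cls : α → Fin k)
    (a : ℝ) (G : Finset α) : ℝ :=
  ∑ i : Fin k, ∑ j : Fin k, if i ≠ j then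
    max (max ((classCount cls i G : ℝ) - a) 0 * max ((classCount cls j G : ℝ) - a) 0 - a ^ 2) 0
  else 0

/-- convex increment lemma for `u ↦ max (u - b) 0` -/
lemma hconv (b u u' δ δ' : ℝ) (h0 : 0 ≤ δ) (hδ : δ ≤ δ') (hu : u ≤ u') :
    max (u + δ - b) 0 - max (u - b) 0 ≤ max (u' + δ' - b) 0 - max (u' - b) 0 := by
  simp only [max_def]
  split_ifs <;> linarith

lemma Tmono (a s s' t t' : ℝ) (hs : s ≤ s') (ht : t ≤ t') :
    max (max (s - a) 0 * max (t - a) 0 - a ^ 2) 0 ≤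
      max (max (s' - a) 0 * max (t' - a) 0 - a ^ 2) 0 := by
  refine max_le_max (sub_le_sub_right ?_ _) le_rfl
  exact mul_le_mul (max_le_max (by linarith) le_rfl) (max_le_max (by linarith) le_rfl)
    (le_max_right _ _) (le_max_right _ _)

lemma key2 (a s s' t t' : ℝ) (hs : s ≤ s') (ht : t ≤ t') :
    max (max (s + 1 - a) 0 * max (t - a) 0 - a ^ 2) 0 -
      max (max (s - a) 0 * max (t - a) 0 - a ^ 2) 0 ≤
    max (max (s' + 1 - a) 0 * max (t' - a) 0 - a ^ 2) 0 -
      max (max (s' - a) 0 * max (t' - a) 0 - a ^ 2) 0 := by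
  have hδinc : max (s + 1 - a) 0 - max (s - a) 0 ≤ max (s' + 1 - a) 0 - max (s' - a) 0 :=
    hconv a s s' 1 1 one_pos.le le_rfl hs
  have hδ0 : 0 ≤ max (s + 1 - a) 0 - max (s - a) 0 :=
    sub_nonneg.2 (max_le_max (by linarith) le_rfl)
  have hδ0' : 0 ≤ max (s' + 1 - a) 0 - max (s' - a) 0 :=
    sub_nonneg.2 (max_le_max (by linarith) le_rfl)
  have key := hconv (a ^ 2)
    (max (s - a) 0 * max (t - a) 0)
    (max (s' - a) 0 * max (t' - a) 0)
    ((max (s + 1 - a) 0 - max (s - a) 0) * max (t - a) 0)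
    ((max (s' + 1 - a) 0 - max (s' - a) 0) * max (t' - a) 0)
    (mul_nonneg hδ0 (le_max_right _ _))
    (mul_le_mul hδinc (max_le_max (by linarith) le_rfl) (le_max_right _ _) hδ0')
    (mul_le_mul (max_le_max (by linarith) le_rfl) (max_le_max (by linarith) le_rfl)
      (le_max_right _ _) (le_max_right _ _))
  have e1 : max (s - a) 0 * max (t - a) 0 +
      (max (s + 1 - a) 0 - max (s - a) 0) * max (t - a) 0
      = max (s + 1 - a) 0 * max (t - a) 0 := by ring
  have e2 : max (s' - a) 0 * max (t' - a) 0 +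
      (max (s' + 1 - a) 0 - max (s' - a) 0) * max (t' - a) 0
      = max (s' + 1 - a) 0 * max (t' - a) 0 := by ring
  rw [e1, e2] at key
  exact key

lemma key2' (a s s' t t' : ℝ) (hs : s ≤ s') (ht : t ≤ t') :
    max (max (s - a) 0 * max (t + 1 - a) 0 - a ^ 2) 0 -
      max (max (s - a) 0 * max (t - a) 0 - a ^ 2) 0 ≤
    max (max (s' - a) 0 * max (t' + 1 - a) 0 - a ^ 2) 0 -
      max (max (s' - a) 0 * max (t' - a) 0 - a ^ 2) 0 := by
  have := key2 a t t' s s' ht hs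
  simpa [mul_comm] using this

lemma classCount_mono {α : Type*} [DecidableEq α] {k : ℕ} (cls : α → Fin k)
    (i : Fin k) {R G : Finset α} (h : R ⊆ G) :
    classCount cls i R ≤ classCount cls i G :=
  Finset.card_le_card (Finset.filter_subset_filter _ h)

lemma classCount_insert {α : Type*} [DecidableEq α] {k : ℕ} (cls : α → Fin k)
    (i : Fin k) {G : Finset α} {x : α} (hx : x ∉ G) :
    classCount cls i (insert x G) =
      classCount cls i G + if cls x = i then 1 else 0 := by
  unfold classCount
  rw [Finset.filter_insert]
  split_ifs with h
  · rw [Finset.card_insert_of_notMem (fun hm => hx (Finset.mem_of_mem_filter x hm))]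
  · simp

lemma zero_term (a s t : ℝ) (ha : 0 ≤ a) (h : s = 0 ∨ t = 0) :
    max (max (s - a) 0 * max (t - a) 0 - a ^ 2) 0 = 0 := by
  rcases h with h | h <;> subst h <;>
  · rw [max_eq_right (by linarith : (0:ℝ) - a ≤ 0)]
    simp only [zero_mul, mul_zero]
    exact max_eq_right (by nlinarith [sq_nonneg a])

theorem stmt_9 {α : Type*} [DecidableEq α] (k : ℕ) (cls : α → Fin k)
    (a : ℝ) (ha : 0 ≤ a) :
    (∀ G : Finset α, 0 ≤ hingedPairs cls a G) ∧
    (∀ G : Finset α, (∀ x ∈ G, ∀ y ∈ G, cls x = cls y) → hingedPairs cls a G = 0) ∧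
    (∀ R G : Finset α, R ⊆ G → hingedPairs cls a R ≤ hingedPairs cls a G) ∧
    (∀ (R G : Finset α) (x : α), R ⊆ G → x ∉ G →
      hingedPairs cls a (insert x G) - hingedPairs cls a G ≥
        hingedPairs cls a (insert x R) - hingedPairs cls a R) := by
  refine ⟨?_, ?_, ?_, ?_⟩
  · intro G
    apply Finset.sum_nonneg
    intro i _
    apply Finset.sum_nonneg
    intro j _
    split_ifs
    · exact le_max_right _ _
    · exact le_refl 0
  · intro G hG
    unfold hingedPairs
    apply Finset.sum_eq_zero
    intro i _
    apply Finset.sum_eq_zero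
    intro j _
    split_ifs with hij
    · apply zero_term _ _ _ ha
      by_contra hc
      push_neg at hc
      obtain ⟨h1, h2⟩ := hc
      have hi : classCount cls i G ≠ 0 := fun h => h1 (by simp [h])
      have hj : classCount cls j G ≠ 0 := fun h => h2 (by simp [h])
      obtain ⟨x, hx⟩ := Finset.card_pos.mp (Nat.pos_of_ne_zero hi)
      obtain ⟨y, hy⟩ := Finset.card_pos.mp (Nat.pos_of_ne_zero hj)
      simp only [Finset.mem_filter] at hx hy
      exact hij (hx.2 ▸ hy.2 ▸ hG x hx.1 y hy.1)
    · rfl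
  · intro R G hRG
    unfold hingedPairs
    apply Finset.sum_le_sum
    intro i _
    apply Finset.sum_le_sum
    intro j _
    split_ifs
    · exact Tmono a _ _ _ _
        (by exact_mod_cast classCount_mono cls i hRG)
        (by exact_mod_cast classCount_mono cls j hRG)
    · exact le_rfl
  · intro R G x hRG hxG
    have hxR : x ∉ R := fun h => hxG (hRG h)
    unfold hingedPairs
    rw [ge_iff_le, ← Finset.sum_sub_distrib, ← Finset.sum_sub_distrib]
    apply Finset.sum_le_sum
    intro i _
    rw [← Finset.sum_sub_distrib, ← Finset.sum_sub_distrib]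
    apply Finset.sum_le_sum
    intro j _
    split_ifs with hij
    · rw [classCount_insert cls i hxG, classCount_insert cls j hxG,
        classCount_insert cls i hxR, classCount_insert cls j hxR]
      have hi : (classCount cls i R : ℝ) ≤ classCount cls i G := by
        exact_mod_cast classCount_mono cls i hRG
      have hj : (classCount cls j R : ℝ) ≤ classCount cls j G := by
        exact_mod_cast classCount_mono cls j hRG
      by_cases hci : cls x = i
      · have hcj : ¬ cls x = j := fun h => hij (hci ▸ h ▸ rfl)
        simp only [if_pos hci, if_neg hcj]
        push_cast
        simp only [add_zero]
        exact key2 a _ _ _ _ hi hj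
      · by_cases hcj : cls x = j
        · simp only [if_neg hci, if_pos hcj]
          push_cast
          simp only [add_zero]
          exact key2' a _ _ _ _ hi hj
        · simp only [if_neg hci, if_neg hcj]
          push_cast
          simp
    · simp
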